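/- A T-tree is the ⋞-minimal representative of its isomorphism class if and only if it is canonical, where canonical means that every T-list of every node is sorted in non-decreasing ⋞ order and every subtree is itself canonical. -/

import Mathlib

/-- A T-tree: a node labeled by a type (ℕ), with children grouped into
    T-lists (one list per component type, in type order). -/
inductive TTree : Type where
  | node : ℕ → List (List TTree) → TTree

namespace TTree

/-- The root type (label) of a T-tree. -/
def label : TTree → ℕ
  | .node a _ => a

/-- The list of T-lists of a T-tree. -/
def tlists : TTree → List (List TTree)
  | .node _ ls => ls

/-- A T-tree is a leaf iff all its T-lists are empty. -/
def isLeaf : TTree → Bool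
  | .node _ ls => ls.all List.isEmpty

mutual
  /-- Comparison of T-trees: root types first, then the sequences of T-lists
      lexicographically by the T-list order ≪. -/
  def cmpT : TTree → TTree → Ordering
    | .node a ls, .node b ls' => (compare a b).then (cmpOuter ls ls')
  /-- Lexicographic comparison of sequences of T-lists by ≪
      (≪ compares T-lists by length first, then lexicographically by ⋞). -/
  def cmpOuter : List (List TTree) → List (List TTree) → Ordering
    | [], [] => .eq
    | [], _ :: _ => .lt
    | _ :: _, [] => .gt
    | l :: ls, l' :: ls' =>
        (((compare l.length l'.length).then (cmpInner l l')).then (cmpOuter ls ls'))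
  /-- Lexicographic comparison of equal-length T-lists by ⋞. -/
  def cmpInner : List TTree → List TTree → Ordering
    | [], [] => .eq
    | [], _ :: _ => .lt
    | _ :: _, [] => .gt
    | a :: as, b :: bs => (cmpT a b).then (cmpInner as bs)
end

/-- The order ⋞ on T-trees. -/
def le (C C' : TTree) : Prop := cmpT C C' ≠ .gt

/-- The order ≪ on T-lists: length first, then lexicographically by ⋞. -/
def lle (L L' : List TTree) : Prop :=
  ((compare L.length L'.length).then (cmpInner L L')) ≠ .gt

/-- Canonicity of a T-tree: every T-list sorted non-decreasingly by ⋞,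
    every subtree canonical. -/
inductive Canonical : TTree → Prop where
  | mk (a : ℕ) (ls : List (List TTree))
      (hsorted : ∀ L ∈ ls, L.Chain' le)
      (hrec : ∀ L ∈ ls, ∀ c ∈ L, Canonical c) :
      Canonical (.node a ls)

end TTree

namespace TTree

mutual
  /-- Isomorphism of T-trees: same root type, and the T-lists are pairwise
      related by permutation up to isomorphism, recursively. -/
  inductive Iso : TTree → TTree → Prop where
    | mk (a : ℕ) (ls ls' : List (List TTree)) :
        IsoOuter ls ls' → Iso (.node a ls) (.node a ls')
  /-- Pointwise relation between the sequences of T-lists. -/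
  inductive IsoOuter : List (List TTree) → List (List TTree) → Prop where
    | nil : IsoOuter [] []
    | cons {L L' : List TTree} {ls ls' : List (List TTree)} :
        IsoList L L' → IsoOuter ls ls' → IsoOuter (L :: ls) (L' :: ls')
  /-- Permutation of a T-list up to isomorphism of its members. -/
  inductive IsoList : List TTree → List TTree → Prop where
    | nil : IsoList [] []
    | cons {a b : TTree} {l₁ l₂ : List TTree} :
        Iso a b → IsoList l₁ l₂ → IsoList (a :: l₁) (b :: l₂)
    | swap (a b : TTree) (l : List TTree) : IsoList (a :: b :: l) (b :: a :: l)
    | trans {l₁ l₂ l₃ : List TTree} :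
        IsoList l₁ l₂ → IsoList l₂ l₃ → IsoList l₁ l₃
end

end TTree
namespace TTree

/-! ### Basic properties of the comparison functions -/

mutual
theorem cmpT_refl : ∀ a : TTree, cmpT a a = .eq
  | .node a ls => by
      rw [cmpT, cmpOuter_refl ls, Nat.compare_eq_eq.mpr rfl]; rfl
theorem cmpOuter_refl : ∀ ls, cmpOuter ls ls = .eq
  | [] => by rw [cmpOuter]
  | L :: ls => by
      rw [cmpOuter, cmpInner_refl L, cmpOuter_refl ls, Nat.compare_eq_eq.mpr rfl]; rfl
theorem cmpInner_refl : ∀ L, cmpInner L L = .eq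
  | [] => by rw [cmpInner]
  | c :: L => by rw [cmpInner, cmpT_refl c, cmpInner_refl L]; rfl
end

mutual
theorem cmpT_eq : ∀ {a b : TTree}, cmpT a b = .eq → a = b
  | .node a ls, .node b ls', h => by
      rw [cmpT, Ordering.then_eq_eq] at h
      obtain ⟨h1, h2⟩ := h
      obtain rfl := Nat.compare_eq_eq.mp h1
      rw [cmpOuter_eq h2]
theorem cmpOuter_eq : ∀ {ls ls' : List (List TTree)}, cmpOuter ls ls' = .eq → ls = ls'
  | [], [], _ => rfl
  | [], _ :: _, h => by rw [cmpOuter] at h; exact absurd h (by simp)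
  | _ :: _, [], h => by rw [cmpOuter] at h; exact absurd h (by simp)
  | L :: ls, L' :: ls', h => by
      rw [cmpOuter, Ordering.then_eq_eq, Ordering.then_eq_eq] at h
      obtain ⟨⟨_, h2⟩, h3⟩ := h
      rw [cmpInner_eq h2, cmpOuter_eq h3]
theorem cmpInner_eq : ∀ {L L' : List TTree}, cmpInner L L' = .eq → L = L'
  | [], [], _ => rfl
  | [], _ :: _, h => by rw [cmpInner] at h; exact absurd h (by simp)
  | _ :: _, [], h => by rw [cmpInner] at h; exact absurd h (by simp)
  | a :: as, b :: bs, h => by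
      rw [cmpInner, Ordering.then_eq_eq] at h
      rw [cmpT_eq h.1, cmpInner_eq h.2]
end

mutual
theorem cmpT_swap : ∀ a b : TTree, cmpT b a = (cmpT a b).swap
  | .node a ls, .node b ls' => by
      rw [cmpT, cmpT, Ordering.swap_then, Nat.compare_swap, cmpOuter_swap]
theorem cmpOuter_swap : ∀ ls ls', cmpOuter ls' ls = (cmpOuter ls ls').swap
  | [], [] => rfl
  | [], _ :: _ => rfl
  | _ :: _, [] => rfl
  | L :: ls, L' :: ls' => by
      rw [cmpOuter, cmpOuter, Ordering.swap_then, Ordering.swap_then, Nat.compare_swap,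
        cmpInner_swap, cmpOuter_swap]
theorem cmpInner_swap : ∀ L L', cmpInner L' L = (cmpInner L L').swap
  | [], [] => rfl
  | [], _ :: _ => rfl
  | _ :: _, [] => rfl
  | a :: as, b :: bs => by
      rw [cmpInner, cmpInner, Ordering.swap_then, cmpT_swap, cmpInner_swap]
end

mutual
theorem cmpT_lt_trans : ∀ {a b c : TTree},
    cmpT a b = .lt → cmpT b c = .lt → cmpT a c = .lt
  | .node a la, .node b lb, .node c lc, h1, h2 => by
      rw [cmpT, Ordering.then_eq_lt] at h1 h2 ⊢
      rcases h1 with h1 | ⟨h1e, h1o⟩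
      · rcases h2 with h2 | ⟨h2e, h2o⟩
        · exact Or.inl (Nat.compare_eq_lt.mpr
            (lt_trans (Nat.compare_eq_lt.mp h1) (Nat.compare_eq_lt.mp h2)))
        · obtain rfl := Nat.compare_eq_eq.mp h2e
          exact Or.inl h1
      · obtain rfl := Nat.compare_eq_eq.mp h1e
        rcases h2 with h2 | ⟨h2e, h2o⟩
        · exact Or.inl h2
        · exact Or.inr ⟨h2e, cmpOuter_lt_trans h1o h2o⟩
theorem cmpOuter_lt_trans : ∀ {l₁ l₂ l₃ : List (List TTree)},
    cmpOuter l₁ l₂ = .lt → cmpOuter l₂ l₃ = .lt → cmpOuter l₁ l₃ = .lt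
  | [], [], _, h1, _ => by rw [cmpOuter] at h1; exact absurd h1 (by simp)
  | [], _ :: _, [], _, h2 => by rw [cmpOuter] at h2; exact absurd h2 (by simp)
  | [], _ :: _, _ :: _, _, _ => by rw [cmpOuter]
  | _ :: _, [], _, h1, _ => by rw [cmpOuter] at h1; exact absurd h1 (by simp)
  | _ :: _, _ :: _, [], _, h2 => by rw [cmpOuter] at h2; exact absurd h2 (by simp)
  | L₁ :: l₁, L₂ :: l₂, L₃ :: l₃, h1, h2 => by
      rw [cmpOuter, Ordering.then_eq_lt, Ordering.then_eq_lt] at h1 h2 ⊢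
      rcases h1 with (h1 | ⟨h1e, h1i⟩) | ⟨h1e, h1o⟩
      · -- length L₁ < length L₂
        rcases h2 with (h2 | ⟨h2e, _⟩) | ⟨h2e, _⟩
        · exact Or.inl (Or.inl (Nat.compare_eq_lt.mpr
            (lt_trans (Nat.compare_eq_lt.mp h1) (Nat.compare_eq_lt.mp h2))))
        · exact Or.inl (Or.inl (by
            rw [← Nat.compare_eq_eq.mp h2e]; exact h1))
        · rw [Ordering.then_eq_eq] at h2e
          exact Or.inl (Or.inl (by rw [← Nat.compare_eq_eq.mp h2e.1]; exact h1))
      · -- lengths equal, cmpInner L₁ L₂ = lt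
        rcases h2 with (h2 | ⟨h2e, h2i⟩) | ⟨h2e, h2o⟩
        · exact Or.inl (Or.inl (by rw [Nat.compare_eq_eq.mp h1e]; exact h2))
        · exact Or.inl (Or.inr ⟨by rw [Nat.compare_eq_eq.mp h1e]; exact h2e,
            cmpInner_lt_trans h1i h2i⟩)
        · rw [Ordering.then_eq_eq] at h2e
          obtain rfl := cmpInner_eq h2e.2
          exact Or.inl (Or.inr ⟨by rw [Nat.compare_eq_eq.mp h1e]; exact h2e.1, h1i⟩)
      · -- first pair fully equal
        rw [Ordering.then_eq_eq] at h1e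
        obtain rfl := cmpInner_eq h1e.2
        rcases h2 with (h2 | ⟨h2e, h2i⟩) | ⟨h2e, h2o⟩
        · exact Or.inl (Or.inl (by rw [Nat.compare_eq_eq.mp h1e.1]; exact h2))
        · exact Or.inl (Or.inr ⟨by rw [Nat.compare_eq_eq.mp h1e.1]; exact h2e, h2i⟩)
        · exact Or.inr ⟨by rw [Ordering.then_eq_eq]; exact
            ⟨by rw [Nat.compare_eq_eq.mp h1e.1]; exact (Ordering.then_eq_eq.mp h2e).1,
             (Ordering.then_eq_eq.mp h2e).2⟩, cmpOuter_lt_trans h1o h2o⟩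
theorem cmpInner_lt_trans : ∀ {L₁ L₂ L₃ : List TTree},
    cmpInner L₁ L₂ = .lt → cmpInner L₂ L₃ = .lt → cmpInner L₁ L₃ = .lt
  | [], [], _, h1, _ => by rw [cmpInner] at h1; exact absurd h1 (by simp)
  | [], _ :: _, [], _, h2 => by rw [cmpInner] at h2; exact absurd h2 (by simp)
  | [], _ :: _, _ :: _, _, _ => by rw [cmpInner]
  | _ :: _, [], _, h1, _ => by rw [cmpInner] at h1; exact absurd h1 (by simp)
  | _ :: _, _ :: _, [], _, h2 => by rw [cmpInner] at h2; exact absurd h2 (by simp)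
  | a :: as, b :: bs, c :: cs, h1, h2 => by
      rw [cmpInner, Ordering.then_eq_lt] at h1 h2 ⊢
      rcases h1 with h1 | ⟨h1e, h1i⟩
      · rcases h2 with h2 | ⟨h2e, h2i⟩
        · exact Or.inl (cmpT_lt_trans h1 h2)
        · obtain rfl := cmpT_eq h2e
          exact Or.inl h1
      · obtain rfl := cmpT_eq h1e
        rcases h2 with h2 | ⟨h2e, h2i⟩
        · exact Or.inl h2
        · exact Or.inr ⟨h2e, cmpInner_lt_trans h1i h2i⟩
end

theorem le_refl' (a : TTree) : le a a := by simp [le, cmpT_refl]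

theorem le_trans' : ∀ {a b c : TTree}, le a b → le b c → le a c := by
  intro a b c hab hbc
  unfold le at *
  cases h1 : cmpT a b with
  | gt => exact absurd h1 hab
  | eq => obtain rfl := cmpT_eq h1; exact hbc
  | lt =>
    cases h2 : cmpT b c with
    | gt => exact absurd h2 hbc
    | eq => obtain rfl := cmpT_eq h2; simp [h1]
    | lt => simp [cmpT_lt_trans h1 h2]

theorem eq_of_le_le {a b : TTree} (h1 : le a b) (h2 : le b a) : a = b := by
  unfold le at *
  rw [cmpT_swap a b] at h2
  cases h : cmpT a b with
  | eq => exact cmpT_eq h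
  | lt => rw [h] at h2; exact absurd rfl h2
  | gt => exact absurd h h1

end TTree
namespace TTree

/-! ### Iso is an equivalence -/

mutual
theorem iso_refl : ∀ a : TTree, Iso a a
  | .node a ls => .mk a ls ls (isoOuter_refl ls)
theorem isoOuter_refl : ∀ ls, IsoOuter ls ls
  | [] => .nil
  | L :: ls => .cons (isoList_refl L) (isoOuter_refl ls)
theorem isoList_refl : ∀ L, IsoList L L
  | [] => .nil
  | c :: L => .cons (iso_refl c) (isoList_refl L)
end

theorem iso_symm {a b : TTree} (h : Iso a b) : Iso b a :=
  h.rec (motive_1 := fun x y _ => Iso y x) (motive_2 := fun x y _ => IsoOuter y x)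
    (motive_3 := fun x y _ => IsoList y x)
    (fun a ls ls' _ ih => .mk a ls' ls ih)
    .nil
    (fun _ _ ih1 ih2 => .cons ih1 ih2)
    .nil
    (fun _ _ ih1 ih2 => .cons ih1 ih2)
    (fun a b l => .swap b a l)
    (fun _ _ ih1 ih2 => .trans ih2 ih1)

theorem isoOuter_symm {ls ls' : List (List TTree)} (h : IsoOuter ls ls') : IsoOuter ls' ls :=
  h.rec (motive_1 := fun x y _ => Iso y x) (motive_2 := fun x y _ => IsoOuter y x)
    (motive_3 := fun x y _ => IsoList y x)
    (fun a ls ls' _ ih => .mk a ls' ls ih)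
    .nil
    (fun _ _ ih1 ih2 => .cons ih1 ih2)
    .nil
    (fun _ _ ih1 ih2 => .cons ih1 ih2)
    (fun a b l => .swap b a l)
    (fun _ _ ih1 ih2 => .trans ih2 ih1)

theorem isoOuter_trans : ∀ {l₁ l₂ l₃ : List (List TTree)},
    IsoOuter l₁ l₂ → IsoOuter l₂ l₃ → IsoOuter l₁ l₃
  | _, _, _, .nil, h2 => h2
  | _, _, _, .cons hL hls, .cons hL' hls' =>
      .cons (.trans hL hL') (isoOuter_trans hls hls')

theorem iso_trans : ∀ {a b c : TTree}, Iso a b → Iso b c → Iso a c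
  | _, _, _, .mk a ls ls' h, .mk _ _ ls'' h' => .mk a ls ls'' (isoOuter_trans h h')

instance : IsTrans TTree Iso := ⟨fun _ _ _ => iso_trans⟩

theorem isoList_length {L L' : List TTree} (h : IsoList L L') : L.length = L'.length :=
  h.rec (motive_1 := fun _ _ _ => True) (motive_2 := fun _ _ _ => True)
    (motive_3 := fun x y _ => x.length = y.length)
    (fun _ _ _ _ _ => trivial) trivial (fun _ _ _ _ => trivial)
    rfl (fun _ _ _ ih => by simp [ih]) (fun _ _ _ => by simp)
    (fun _ _ ih1 ih2 => ih1.trans ih2)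

theorem rel_refl_list : ∀ L : List TTree, Multiset.Rel Iso (↑L) (↑L)
  | [] => Multiset.Rel.zero
  | c :: L => Multiset.Rel.cons (iso_refl c) (rel_refl_list L)

theorem isoList_rel {L L' : List TTree} (h : IsoList L L') :
    Multiset.Rel Iso (↑L) (↑L') :=
  h.rec (motive_1 := fun _ _ _ => True) (motive_2 := fun _ _ _ => True)
    (motive_3 := fun x y _ => Multiset.Rel Iso (↑x) (↑y))
    (fun _ _ _ _ _ => trivial) trivial (fun _ _ _ _ => trivial)
    Multiset.Rel.zero
    (fun h1 _ _ ih => Multiset.Rel.cons h1 ih)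
    (fun a b l => by
      have : (↑(a :: b :: l) : Multiset TTree) = ↑(b :: a :: l) :=
        Multiset.coe_eq_coe.mpr (List.Perm.swap b a l)
      show Multiset.Rel Iso _ _
      rw [this]; exact rel_refl_list _)
    (fun _ _ ih1 ih2 => Multiset.Rel.trans Iso ih1 ih2)

theorem isoList_of_perm : ∀ {L L' : List TTree}, L.Perm L' → IsoList L L' := by
  intro L L' h
  induction h with
  | nil => exact .nil
  | cons x _ ih => exact .cons (iso_refl x) ih
  | swap x y l => exact .swap y x l
  | trans _ _ ih1 ih2 => exact .trans ih1 ih2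

theorem rel_cons_cancel {a : TTree} {s t : Multiset TTree}
    (h : Multiset.Rel Iso (a ::ₘ s) (a ::ₘ t)) : Multiset.Rel Iso s t := by
  rcases Multiset.rel_cons_right.mp h with ⟨x, s₀, hxa, hrel, heq⟩
  rcases Multiset.cons_eq_cons.mp heq with ⟨rfl, rfl⟩ | ⟨hne, u, rfl, rfl⟩
  · exact hrel
  · rcases Multiset.rel_cons_left.mp hrel with ⟨b, t₀, hab, hrel', rfl⟩
    exact Multiset.Rel.cons (iso_trans hxa hab) hrel'

end TTree
namespace TTree

theorem chain'_head_le : ∀ {a : TTree} {as : List TTree},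
    List.Chain' le (a :: as) → ∀ c ∈ a :: as, le a c := by
  intro a as
  induction as generalizing a with
  | nil =>
    intro _ c hc
    obtain rfl : c = a := by simpa using hc
    exact le_refl' _
  | cons b as ih =>
    intro h c hc
    have hab : le a b := (List.isChain_cons_cons.mp h).1
    rcases List.mem_cons.mp hc with rfl | hc
    · exact le_refl' c
    · exact le_trans' hab (ih (List.isChain_cons_cons.mp h).2 c hc)

theorem sorted_le_inner : ∀ (L' L : List TTree), List.Chain' le L →
    Multiset.Rel Iso (↑L) (↑L') → (∀ c ∈ L, ∀ d, Iso c d → le c d) →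
    cmpInner L L' ≠ .gt := by
  intro L'
  induction L' with
  | nil =>
    intro L _ hrel _
    rw [show ((↑([] : List TTree)) : Multiset TTree) = 0 from rfl,
      Multiset.rel_zero_right] at hrel
    obtain rfl : L = [] := by
      cases L with
      | nil => rfl
      | cons a as => exact absurd hrel (by simp)
    rw [cmpInner]; simp
  | cons b bs ih =>
    intro L hch hrel H
    have hrel' : Multiset.Rel Iso (↑L) (b ::ₘ (↑bs)) := hrel
    rcases Multiset.rel_cons_right.mp hrel' with ⟨x, s₀, hxb, hrel₀, heq⟩
    cases L with
    | nil => exact absurd heq (by simp)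
    | cons a as =>
      have hx_mem : x ∈ a :: as := by
        have : x ∈ (↑(a :: as) : Multiset TTree) := by
          rw [heq]; exact Multiset.mem_cons_self x s₀
        simpa using this
      have hab : le a b := le_trans' (chain'_head_le hch x hx_mem) (H x hx_mem b hxb)
      rw [cmpInner]
      cases hcb : cmpT a b with
      | lt => simp [Ordering.then]
      | gt => exact absurd hcb hab
      | eq =>
        obtain rfl := cmpT_eq hcb
        show (Ordering.eq.then (cmpInner as bs)) ≠ .gt
        have htail : Multiset.Rel Iso (↑as) (↑bs) := by
          apply rel_cons_cancel (a := a)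
          exact hrel
        exact ih as (List.IsChain.tail hch) htail (fun c hc => H c (List.mem_cons_of_mem _ hc))

theorem outer_le : ∀ {ls ls' : List (List TTree)}, IsoOuter ls ls' →
    (∀ L ∈ ls, List.Chain' le L) →
    (∀ L ∈ ls, ∀ c ∈ L, ∀ d, Iso c d → le c d) →
    cmpOuter ls ls' ≠ .gt
  | _, _, .nil, _, _ => by rw [cmpOuter]; simp
  | L :: ls, L' :: ls', .cons hL hls, hch, H => by
    rw [cmpOuter]
    have hlen : L.length = L'.length := isoList_length hL
    have hinner : cmpInner L L' ≠ .gt :=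
      sorted_le_inner L' L (hch L (List.mem_cons_self)) (isoList_rel hL)
        (H L (List.mem_cons_self))
    have houter : cmpOuter ls ls' ≠ .gt :=
      outer_le hls (fun M hM => hch M (List.mem_cons_of_mem L hM))
        (fun M hM => H M (List.mem_cons_of_mem L hM))
    rw [Nat.compare_eq_eq.mpr hlen]
    cases hi : cmpInner L L' with
    | lt => simp [Ordering.then]
    | gt => exact absurd hi hinner
    | eq => exact houter

theorem canonical_sorted {a : ℕ} {ls : List (List TTree)}
    (h : Canonical (.node a ls)) : ∀ L ∈ ls, List.Chain' le L := by
  cases h; assumption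

theorem canonical_children {a : ℕ} {ls : List (List TTree)}
    (h : Canonical (.node a ls)) : ∀ L ∈ ls, ∀ c ∈ L, Canonical c := by
  cases h; assumption

theorem iso_node_inv {a : ℕ} {ls : List (List TTree)} {C' : TTree}
    (h : Iso (.node a ls) C') : ∃ ls', C' = .node a ls' ∧ IsoOuter ls ls' := by
  cases h; exact ⟨_, rfl, by assumption⟩

theorem canonical_le_iso : ∀ (C : TTree), Canonical C → ∀ C', Iso C C' → le C C'
  | .node a ls => by
    intro hcan C' hiso
    obtain ⟨ls', rfl, hOut⟩ := iso_node_inv hiso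
    have H : ∀ L ∈ ls, ∀ c ∈ L, ∀ d, Iso c d → le c d := by
      intro L hL c hc d hd
      have hsz : sizeOf c < sizeOf (TTree.node a ls) := by
        have h1 : sizeOf c < sizeOf L := List.sizeOf_lt_of_mem hc
        have h2 : sizeOf L < sizeOf ls := List.sizeOf_lt_of_mem hL
        have h3 : sizeOf ls < sizeOf (TTree.node a ls) := by
          simp only [TTree.node.sizeOf_spec]; omega
        omega
      exact canonical_le_iso c (canonical_children hcan L hL c hc) d hd
    show cmpT _ _ ≠ .gt
    rw [cmpT, Nat.compare_eq_eq.mpr rfl]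
    exact outer_le hOut (canonical_sorted hcan) H
termination_by C => sizeOf C
decreasing_by
  exact hsz

end TTree
namespace TTree

/-- Boolean version of `le`, for `mergeSort`. -/
def leB (x y : TTree) : Bool := cmpT x y != .gt

theorem leB_iff {x y : TTree} : leB x y = true ↔ le x y := by
  cases h : cmpT x y <;> simp [leB, le, h] <;> decide

theorem leB_trans : ∀ (a b c : TTree), leB a b → leB b c → leB a c := by
  intro a b c h1 h2
  exact leB_iff.mpr (le_trans' (leB_iff.mp h1) (leB_iff.mp h2))

theorem leB_total : ∀ (a b : TTree), leB a b || leB b a := by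
  intro a b
  rcases h : cmpT a b with _ | _ | _ <;>
    simp [leB, h, cmpT_swap a b] <;> decide

mutual
def canon : TTree → TTree
  | .node a ls => .node a (canonOuter ls)
def canonOuter : List (List TTree) → List (List TTree)
  | [] => []
  | L :: ls => (canonInner L).mergeSort leB :: canonOuter ls
def canonInner : List TTree → List TTree
  | [] => []
  | c :: cs => canon c :: canonInner cs
end

mutual
theorem canon_iso : ∀ C, Iso C (canon C)
  | .node a ls => by
    rw [canon]
    exact .mk a _ _ (canonOuter_iso ls)
theorem canonOuter_iso : ∀ ls, IsoOuter ls (canonOuter ls)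
  | [] => .nil
  | L :: ls => by
    rw [canonOuter]
    exact .cons
      (IsoList.trans (canonInner_iso L)
        (isoList_of_perm ((canonInner L).mergeSort_perm leB).symm))
      (canonOuter_iso ls)
theorem canonInner_iso : ∀ L, IsoList L (canonInner L)
  | [] => .nil
  | c :: cs => by
    rw [canonInner]
    exact .cons (canon_iso c) (canonInner_iso cs)
end

theorem canonInner_eq_map : ∀ L : List TTree, canonInner L = L.map canon
  | [] => by rw [canonInner]; rfl
  | c :: cs => by rw [canonInner, canonInner_eq_map cs]; rfl

theorem canonOuter_eq_map : ∀ ls : List (List TTree),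
    canonOuter ls = ls.map (fun L => (canonInner L).mergeSort leB)
  | [] => by rw [canonOuter]; rfl
  | L :: ls => by rw [canonOuter, canonOuter_eq_map ls]; rfl

theorem canon_canonical : ∀ C : TTree, Canonical (canon C)
  | .node a ls => by
    rw [canon]
    refine .mk a _ ?_ ?_
    · intro L' hL'
      rw [canonOuter_eq_map] at hL'
      obtain ⟨L, hL, rfl⟩ := List.mem_map.mp hL'
      have hp : ((canonInner L).mergeSort leB).Pairwise (fun x y => leB x y) :=
        List.pairwise_mergeSort leB_trans leB_total (canonInner L)
      exact List.Pairwise.isChain (hp.imp fun h => leB_iff.mp h)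
    · intro L' hL' c hc
      rw [canonOuter_eq_map] at hL'
      obtain ⟨L, hL, rfl⟩ := List.mem_map.mp hL'
      rw [List.mem_mergeSort, canonInner_eq_map] at hc
      obtain ⟨c₀, hc₀, rfl⟩ := List.mem_map.mp hc
      have hsz : sizeOf c₀ < sizeOf (TTree.node a ls) := by
        have h1 : sizeOf c₀ < sizeOf L := List.sizeOf_lt_of_mem hc₀
        have h2 : sizeOf L < sizeOf ls := List.sizeOf_lt_of_mem hL
        have h3 : sizeOf ls < sizeOf (TTree.node a ls) := by
          simp only [TTree.node.sizeOf_spec]; omega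
        omega
      exact canon_canonical c₀
termination_by C => sizeOf C
decreasing_by
  exact hsz

end TTree

/-- A T-tree is the ⋞-minimal representative of its isomorphism class
    if and only if it is canonical. -/
theorem canonical_iff_min :
    ∀ C : TTree, TTree.Canonical C ↔ (∀ C' : TTree, TTree.Iso C C' → TTree.le C C') := by
  intro C
  constructor
  · intro h C' h'
    exact TTree.canonical_le_iso C h C' h'
  · intro h
    have h1 : TTree.le C (TTree.canon C) := h _ (TTree.canon_iso C)
    have h2 : TTree.le (TTree.canon C) C :=
      TTree.canonical_le_iso _ (TTree.canon_canonical C) _ (TTree.iso_symm (TTree.canon_iso C))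
    have : C = TTree.canon C := TTree.eq_of_le_le h1 h2
    rw [this]
    exact TTree.canon_canonical C
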